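/- Fix a real parameter η ≥ 1 and a real number r with 0 ≤ r ≤ 1. For α_sr ∈ [0,η] and f ∈ [0,1], let W(α_sr, f) denote the infimum of s(α₁, α₂, α_sr) over all (α₁, α₂) ∈ [0,1] × [0,1] satisfying min(I_S((α₁,α₂,α_sr), f), I_D((α₁,α₂,α_sr), f)) ≤ r. Then inf_{α_sr ∈ [0,η]} max_{f ∈ [0,1]} W(α_sr, f) = min{η+2, 4} − 3r. -/

import Mathlib

/-!
With the listen fraction `f = 1/3` both cuts are controlled linearly: `3 I_S ≥ 2α₁ + α_sr` and
`3 I_D = 3α₁ + 2α₂`. Moreover `s ≥ η + 2 - (2α₁ + α_sr)` when `α₂ ≤ 1`, and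
`s ≥ 4 - (3α₁ + 2α₂)` when `α_sr ≤ η`. So in outage at rate `r` we get
`s ≥ min (η + 2) 4 - 3r` whatever `α_sr ∈ [0, η]` is. Conversely, taking `α_sr = r` when
`η ≤ 2` (outage point `(r, 1)`, `s = η + 2 - 3r`) or `α_sr = η` when `η ≥ 2` (outage point
`(r, 0)`, `s = 4 - 3r`) caps `W(α_sr, f)` at that value for every `f`.
-/

open Set

/-- The SNR exponent `s(α)` of the joint density of channel exponents
`α = (α₁, α₂, α_sr)`. -/
noncomputable def sExp (η : ℝ) (a : ℝ × ℝ × ℝ) : ℝ :=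
  if a.1 + a.2.1 ≤ 1 then η + 4 - 3 * a.1 - 2 * a.2.1 - a.2.2
  else η + 3 - 2 * a.1 - a.2.1 - a.2.2

/-- Source-side cut mutual information exponent `I_S(α, f)`. -/
noncomputable def IS (a : ℝ × ℝ × ℝ) (f : ℝ) : ℝ :=
  a.1 + f * max (a.2.2 - a.1) 0

/-- Destination-side cut mutual information exponent `I_D(α, f)`. -/
noncomputable def ID (a : ℝ × ℝ × ℝ) (f : ℝ) : ℝ :=
  a.1 + (1 - f) * a.2.1

/-- The local-scheduling inner value `W(α_sr, f)`: the infimum of `s` over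
the channel exponents `(α₁, α₂)` putting the network in outage at
multiplexing gain `r`, for a given source-relay exponent `α_sr` and
schedule `f`. -/
noncomputable def Wlocal (η r αsr f : ℝ) : ℝ :=
  sInf {x : ℝ | ∃ α₁ ∈ Icc (0:ℝ) 1, ∃ α₂ ∈ Icc (0:ℝ) 1,
    min (IS (α₁, α₂, αsr) f) (ID (α₁, α₂, αsr) f) ≤ r ∧ sExp η (α₁, α₂, αsr) = x}

section Exponents

variable {η r α₁ α₂ αsr : ℝ}

lemma sExp_ge_sub_one_sub (h₁ : α₁ ≤ 1) (h₂ : α₂ ≤ 1) :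
    η - 1 - αsr ≤ sExp η (α₁, α₂, αsr) := by
  unfold sExp
  split_ifs <;> linarith

lemma sExp_ge_source_cut (h₂ : α₂ ≤ 1) :
    η + 2 - (2 * α₁ + αsr) ≤ sExp η (α₁, α₂, αsr) := by
  unfold sExp
  split_ifs <;> linarith

lemma sExp_ge_destination_cut (hsr : αsr ≤ η) :
    4 - (3 * α₁ + 2 * α₂) ≤ sExp η (α₁, α₂, αsr) := by
  unfold sExp
  split_ifs <;> linarith

lemma two_mul_add_le_three_mul_IS_third (a : ℝ × ℝ × ℝ) : 2 * a.1 + a.2.2 ≤ 3 * IS a (1 / 3) := by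
  have := le_max_left (a.2.2 - a.1) 0
  unfold IS
  linarith

lemma three_mul_ID_third (a : ℝ × ℝ × ℝ) : 3 * ID a (1 / 3) = 3 * a.1 + 2 * a.2.1 := by
  unfold ID
  ring

lemma sExp_ge_of_outage_third (h₂ : α₂ ≤ 1) (hsr : αsr ≤ η)
    (hout : min (IS (α₁, α₂, αsr) (1 / 3)) (ID (α₁, α₂, αsr) (1 / 3)) ≤ r) :
    min (η + 2) 4 - 3 * r ≤ sExp η (α₁, α₂, αsr) := by
  rcases min_le_iff.mp hout with hS | hD
  · have := two_mul_add_le_three_mul_IS_third (α₁, α₂, αsr)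
    have := sExp_ge_source_cut (η := η) (α₁ := α₁) (αsr := αsr) h₂
    have := min_le_left (η + 2) 4
    linarith
  · have := three_mul_ID_third (α₁, α₂, αsr)
    have := sExp_ge_destination_cut (α₁ := α₁) (α₂ := α₂) hsr
    have := min_le_right (η + 2) 4
    linarith

end Exponents

section Wlocal

variable {η r f αsr c : ℝ}

lemma Wlocal_le_sExp {α₁ α₂ : ℝ} (h₁ : α₁ ∈ Icc (0 : ℝ) 1) (h₂ : α₂ ∈ Icc (0 : ℝ) 1)
    (hout : min (IS (α₁, α₂, αsr) f) (ID (α₁, α₂, αsr) f) ≤ r) :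
    Wlocal η r αsr f ≤ sExp η (α₁, α₂, αsr) := by
  refine csInf_le ⟨η - 1 - αsr, ?_⟩ ⟨α₁, h₁, α₂, h₂, hout, rfl⟩
  rintro _ ⟨β₁, hβ₁, β₂, hβ₂, -, rfl⟩
  exact sExp_ge_sub_one_sub hβ₁.2 hβ₂.2

lemma outage_r_zero (αsr f : ℝ) : min (IS (r, 0, αsr) f) (ID (r, 0, αsr) f) ≤ r :=
  min_le_of_right_le (by simp [ID])

lemma Wlocal_le_sub_sub (hr : r ∈ Icc (0 : ℝ) 1) : Wlocal η r αsr f ≤ η + 4 - 3 * r - αsr := by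
  refine (Wlocal_le_sExp hr ⟨le_rfl, zero_le_one⟩ (outage_r_zero αsr f)).trans_eq ?_
  rw [sExp, if_pos (by linarith [hr.2])]
  ring

lemma Wlocal_self_le (hr : r ∈ Icc (0 : ℝ) 1) : Wlocal η r r f ≤ η + 2 - 3 * r := by
  have hout : min (IS (r, 1, r) f) (ID (r, 1, r) f) ≤ r :=
    min_le_of_left_le (by simp [IS])
  refine (Wlocal_le_sExp hr ⟨zero_le_one, le_rfl⟩ hout).trans_eq ?_
  unfold sExp
  split_ifs with h
  · obtain rfl : r = 0 := le_antisymm (by simpa using h) hr.1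
    ring
  · ring

lemma le_Wlocal (hr : r ∈ Icc (0 : ℝ) 1)
    (h : ∀ α₁ ∈ Icc (0 : ℝ) 1, ∀ α₂ ∈ Icc (0 : ℝ) 1,
      min (IS (α₁, α₂, αsr) f) (ID (α₁, α₂, αsr) f) ≤ r → c ≤ sExp η (α₁, α₂, αsr)) :
    c ≤ Wlocal η r αsr f := by
  refine le_csInf ⟨_, r, hr, 0, ⟨le_rfl, zero_le_one⟩, outage_r_zero αsr f, rfl⟩ ?_
  rintro _ ⟨α₁, h₁, α₂, h₂, hout, rfl⟩
  exact h α₁ h₁ α₂ h₂ hout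

lemma le_Wlocal_third (hr : r ∈ Icc (0 : ℝ) 1) (hsr : αsr ≤ η) :
    min (η + 2) 4 - 3 * r ≤ Wlocal η r αsr (1 / 3) :=
  le_Wlocal hr fun _ _ _ h₂ hout => sExp_ge_of_outage_third h₂.2 hsr hout

end Wlocal

/-- `max_{f ∈ [0,1]} W(α_sr, f)`. -/
noncomputable def bestScheduleValue (η r αsr : ℝ) : ℝ :=
  sSup {w : ℝ | ∃ f ∈ Icc (0 : ℝ) 1, w = Wlocal η r αsr f}

section BestSchedule

variable {η r αsr c : ℝ}

lemma bestScheduleValue_le (h : ∀ f ∈ Icc (0 : ℝ) 1, Wlocal η r αsr f ≤ c) :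
    bestScheduleValue η r αsr ≤ c :=
  csSup_le ⟨_, 0, ⟨le_rfl, zero_le_one⟩, rfl⟩ fun _ ⟨f, hf, hw⟩ => hw ▸ h f hf

lemma le_bestScheduleValue (hr : r ∈ Icc (0 : ℝ) 1) (hsr : αsr ≤ η) :
    min (η + 2) 4 - 3 * r ≤ bestScheduleValue η r αsr := by
  have hbdd : BddAbove {w : ℝ | ∃ f ∈ Icc (0 : ℝ) 1, w = Wlocal η r αsr f} :=
    ⟨η + 4 - 3 * r - αsr, fun _ ⟨_, _, hw⟩ => hw ▸ Wlocal_le_sub_sub hr⟩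
  exact (le_Wlocal_third hr hsr).trans
    (le_csSup hbdd ⟨1 / 3, ⟨by norm_num, by norm_num⟩, rfl⟩)

lemma exists_bestScheduleValue_le (hη : 1 ≤ η) (hr : r ∈ Icc (0 : ℝ) 1) :
    ∃ αsr ∈ Icc (0 : ℝ) η, bestScheduleValue η r αsr ≤ min (η + 2) 4 - 3 * r := by
  rcases le_total (η + 2) 4 with hη2 | hη2
  · refine ⟨r, ⟨hr.1, hr.2.trans hη⟩, bestScheduleValue_le fun f _ => ?_⟩
    rw [min_eq_left hη2]
    exact Wlocal_self_le hr
  · refine ⟨η, ⟨by linarith, le_rfl⟩, bestScheduleValue_le fun f _ => ?_⟩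
    rw [min_eq_right hη2]
    linarith [Wlocal_le_sub_sub (η := η) (αsr := η) (f := f) hr]

end BestSchedule

/-- In the low-rate region `r ≤ 1`, local scheduling (where the schedule `f`
may depend only on `α_sr`) achieves the optimal DMT:
`inf_{α_sr ∈ [0,η]} max_{f ∈ [0,1]} W(α_sr, f) = min{η+2, 4} − 3r`. -/
theorem local_schedule_optimal (η r : ℝ) (hη : 1 ≤ η) (hr0 : 0 ≤ r) (hr1 : r ≤ 1) :
    sInf {m : ℝ | ∃ αsr ∈ Icc (0:ℝ) η,
        m = sSup {w : ℝ | ∃ f ∈ Icc (0:ℝ) 1, w = Wlocal η r αsr f}} =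
      min (η + 2) 4 - 3 * r := by
  have hr : r ∈ Icc (0 : ℝ) 1 := ⟨hr0, hr1⟩
  refine IsLeast.csInf_eq ⟨?_, ?_⟩
  · obtain ⟨αsr, hαsr, hle⟩ := exists_bestScheduleValue_le hη hr
    exact ⟨αsr, hαsr, le_antisymm (le_bestScheduleValue hr hαsr.2) hle⟩
  · rintro _ ⟨αsr, hαsr, rfl⟩
    exact le_bestScheduleValue hr hαsr.2
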